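/- Let N be a CCI-envelope of a CCI X of size k ≥ 4 with Y = E(N)\X. If (J; X₁, X₂) is a hyperplane-partition and (J*; X₀*, ...) is a cohyperplane-partition with J* ≠ J, then |X₁ ∩ X₀*| ≠ |X₁| − 1 and |X₂ ∩ X₀*| ≠ |X₂| − 1. -/

import Mathlib

open Set

namespace Matroid

variable {α : Type*}

/-- A circuit: a minimal dependent set. -/
def IsCircuit' (M : Matroid α) (C : Set α) : Prop :=
  C ⊆ M.E ∧ ¬ M.Indep C ∧ ∀ D, D ⊂ C → M.Indep D

/-- A cocircuit: a circuit of the dual matroid. -/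
def IsCocircuit' (M : Matroid α) (C : Set α) : Prop :=
  M✶.IsCircuit' C

/-- A circuit-cocircuit intersection (CCI). -/
def IsCCI (M : Matroid α) (X : Set α) : Prop :=
  ∃ C K, M.IsCircuit' C ∧ M.IsCocircuit' K ∧ X = C ∩ K

/-- A hyperplane: a maximal proper flat. -/
def IsHyperplane (M : Matroid α) (H : Set α) : Prop :=
  M.IsFlat H ∧ H ≠ M.E ∧ ∀ F, M.IsFlat F → H ⊂ F → F = M.E

/-- The rank of a set: the largest size of an independent subset. -/
noncomputable def rk (M : Matroid α) (A : Set α) : ℕ :=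
  sSup {n | ∃ I, I ⊆ A ∧ M.Indep I ∧ I.ncard = n}

/-- The rank of a matroid. -/
noncomputable def rank (M : Matroid α) : ℕ := M.rk M.E

/-- Deletion of a set from a matroid. -/
def del (M : Matroid α) (D : Set α) : Matroid α := M.restrict (M.E \ D)

/-- Contraction of a set in a matroid. -/
def con (M : Matroid α) (C : Set α) : Matroid α := (M✶.restrict (M.E \ C))✶

/-- `N` is a minor of `M` if it is obtained by a contraction followed by a deletion. -/
def IsMinor' (N M : Matroid α) : Prop := ∃ C D, N = (M.con C).del D

end Matroid

open Matroid

/-!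
Write `Y = E \ X`, so `|Y| = k - 2`. Two distinct `(k-3)`-subsets `J ≠ J*` of `Y` cover `Y`.
The complement of the cohyperplane `J* ∪ X₀*` is a circuit, the complement of the hyperplane
`J ∪ X₁` is a cocircuit, and since `J ∪ J* = Y` they meet exactly in `X₂ \ X₀*`. A circuit and
a cocircuit never meet in a single element, so `|X₂ ∩ X₀*| = |X₂| - 1` is impossible as soon as
`X₂ ≠ ∅`. And `X₂ ≠ ∅`: otherwise `J` is a hyperplane and the cocircuit `E \ J`, of size
`k + 1`, would contain the cocircuit `X`.
-/

namespace Matroid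

variable {α : Type*} {M : Matroid α} {C H J J' X X₀ X₁ X₂ : Set α}

lemma isCircuit'_iff : M.IsCircuit' C ↔ M.IsCircuit C := by
  rw [isCircuit_iff_forall_ssubset, Dep]
  exact ⟨fun ⟨hE, hdep, hmin⟩ => ⟨⟨hdep, hE⟩, hmin⟩, fun ⟨⟨hdep, hE⟩, hmin⟩ => ⟨hE, hdep, hmin⟩⟩

lemma isCocircuit'_iff : M.IsCocircuit' C ↔ M.IsCocircuit C :=
  isCircuit'_iff

lemma IsHyperplane.isCocircuit_compl (hH : M.IsHyperplane H) : M.IsCocircuit (M.E \ H) := by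
  obtain ⟨hF, hne, hmax⟩ := hH
  rw [isCocircuit_iff_minimal_compl_nonspanning, minimal_iff_forall_ssubset,
    sdiff_sdiff_cancel_left hF.subset_ground]
  refine ⟨fun hsp => hne (hF.closure ▸ hsp.closure_eq), fun K hK => not_not.2 ?_⟩
  obtain ⟨z, hzH, hzK⟩ := exists_of_ssubset hK
  have hHK : H ⊂ M.E \ K :=
    LE.le.ssubset_of_mem_notMem (fun h hh => ⟨hF.subset_ground hh, fun hk => (hK.subset hk).2 hh⟩)
      ⟨hzH.1, hzK⟩ hzH.2
  rw [spanning_iff_closure_eq]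
  exact hmax _ (isFlat_closure _) (hHK.trans_subset (M.subset_closure _))

lemma IsHyperplane.isCircuit_compl_of_dual (hH : M✶.IsHyperplane H) :
    M.IsCircuit (M.E \ H) := by
  simpa using hH.isCocircuit_compl

lemma IsHyperplane.eq_compl_of_isCocircuit_subset (hH : M.IsHyperplane H) (hK : M.IsCocircuit C)
    (hCH : C ⊆ M.E \ H) : C = M.E \ H :=
  hK.isCircuit.eq_of_subset_isCircuit hH.isCocircuit_compl.isCircuit hCH

lemma IsHyperplane.nonempty_of_isCocircuit (hH : M.IsHyperplane (J ∪ X₂)) (hX : M.IsCocircuit X)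
    (hJ : J ⊆ M.E \ X) (hJX : J ∪ X ≠ M.E) : X₂.Nonempty := by
  rw [nonempty_iff_ne_empty]
  rintro rfl
  rw [union_empty] at hH
  refine hJX ?_
  rw [hH.eq_compl_of_isCocircuit_subset hX ?_]
  · exact union_sdiff_cancel (hJ.trans sdiff_subset)
  · exact subset_sdiff.2 ⟨hX.subset_ground, (subset_sdiff.1 hJ).2.symm⟩

lemma sdiff_ne_singleton_of_isHyperplane (hX : X ⊆ M.E) (hcover : J ∪ J' = M.E \ X)
    (hX₁₂ : X₁ ∪ X₂ = X) (hdisj : Disjoint X₁ X₂) (hH : M.IsHyperplane (J ∪ X₁))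
    (hH' : M✶.IsHyperplane (J' ∪ X₀)) (e : α) : X₂ \ X₀ ≠ {e} := by
  have hinter : (M.E \ (J' ∪ X₀)) ∩ (M.E \ (J ∪ X₁)) = X₂ \ X₀ := by
    subst hX₁₂
    ext t
    have := congrArg (t ∈ ·) hcover
    have := @hX t
    have := hdisj.notMem_of_mem_left (a := t)
    simp only [eq_iff_iff, mem_union, mem_sdiff, mem_inter_iff] at *
    tauto
  rw [← hinter]
  exact hH'.isCircuit_compl_of_dual.inter_isCocircuit_ne_singleton hH.isCocircuit_compl

end Matroid

namespace Set

variable {α : Type*} {s t u : Set α}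

lemma union_eq_of_ne_of_ncard_add_one (hu : u.Finite) (hs : s ⊆ u) (ht : t ⊆ u)
    (hscard : s.ncard + 1 = u.ncard) (htcard : t.ncard + 1 = u.ncard) (hne : s ≠ t) :
    s ∪ t = u := by
  by_contra hsu
  have hstu : s ∪ t ⊆ u := union_subset hs ht
  have hlt := ncard_lt_ncard (hstu.ssubset_of_ne hsu) hu
  have hs_eq : s = s ∪ t := eq_of_subset_of_ncard_le subset_union_left (by omega) (hu.subset hstu)
  have hts : t ⊆ s := hs_eq ▸ subset_union_right
  exact hne (eq_of_subset_of_ncard_le hts (by omega) (hu.subset hs)).symm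

lemma exists_sdiff_eq_singleton_of_ncard_inter (hs : s.Finite) (hne : s.Nonempty)
    (h : (s ∩ t).ncard = s.ncard - 1) : ∃ e, s \ t = {e} := by
  have := ncard_inter_add_ncard_sdiff_eq_ncard s t hs
  have := (ncard_pos hs).2 hne
  exact ncard_eq_one.1 (by omega)

end Set

theorem stmt_11_general {α : Type*} (N : Matroid α) (k : ℕ) (hk : 4 ≤ k)
    (hE : N.E.ncard = 2 * k - 2)
    (X : Set α) (hXcard : X.ncard = k)
    (hXcc : N.IsCocircuit' X)
    (J X₁ X₂ : Set α) (hJ : J ⊆ N.E \ X) (hJcard : J.ncard = k - 3)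
    (hX₁₂ : X₁ ∪ X₂ = X) (hdisj : Disjoint X₁ X₂)
    (hH₁ : N.IsHyperplane (J ∪ X₁)) (hH₂ : N.IsHyperplane (J ∪ X₂))
    (Jst X₀st : Set α) (hJst : Jst ⊆ N.E \ X) (hJstcard : Jst.ncard = k - 3)
    (hHst : N✶.IsHyperplane (Jst ∪ X₀st))
    (hne : Jst ≠ J) :
    (X₁ ∩ X₀st).ncard ≠ X₁.ncard - 1 ∧ (X₂ ∩ X₀st).ncard ≠ X₂.ncard - 1 := by
  have hEfin : N.E.Finite := finite_of_ncard_ne_zero (by omega)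
  have hX : N.IsCocircuit X := isCocircuit'_iff.1 hXcc
  have hXE : X ⊆ N.E := hX.subset_ground
  have hYcard : (N.E \ X).ncard = k - 2 := by
    rw [ncard_sdiff hXE (hEfin.subset hXE)]
    omega
  have hcover : J ∪ Jst = N.E \ X :=
    union_eq_of_ne_of_ncard_add_one hEfin.sdiff hJ hJst (by omega) (by omega) hne.symm
  have hJX : J ∪ X ≠ N.E := fun h => by
    have := ncard_union_le J X
    rw [h] at this
    omega
  refine ⟨fun h => ?_, fun h => ?_⟩
  · obtain ⟨e, he⟩ := exists_sdiff_eq_singleton_of_ncard_inter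
      (hEfin.subset (hX₁₂ ▸ subset_union_left |>.trans hXE))
      (hH₁.nonempty_of_isCocircuit hX hJ hJX) h
    exact sdiff_ne_singleton_of_isHyperplane hXE hcover (union_comm X₁ X₂ ▸ hX₁₂) hdisj.symm hH₂
      hHst e he
  · obtain ⟨e, he⟩ := exists_sdiff_eq_singleton_of_ncard_inter
      (hEfin.subset (hX₁₂ ▸ subset_union_right |>.trans hXE))
      (hH₂.nonempty_of_isCocircuit hX hJ hJX) h
    exact sdiff_ne_singleton_of_isHyperplane hXE hcover hX₁₂ hdisj hH₁ hHst e he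

theorem stmt_11 {α : Type*} (N : Matroid α) (k : ℕ) (hk : 4 ≤ k)
    (hE : N.E.ncard = 2 * k - 2) (hr : N.rank = k - 1) (hr' : N✶.rank = k - 1)
    (X : Set α) (hXcard : X.ncard = k)
    (hXc : N.IsCircuit' X) (hXcc : N.IsCocircuit' X)
    (J X₁ X₂ : Set α) (hJ : J ⊆ N.E \ X) (hJcard : J.ncard = k - 3)
    (hX₁₂ : X₁ ∪ X₂ = X) (hdisj : Disjoint X₁ X₂)
    (hH₁ : N.IsHyperplane (J ∪ X₁)) (hH₂ : N.IsHyperplane (J ∪ X₂))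
    (Jst X₀st : Set α) (hJst : Jst ⊆ N.E \ X) (hJstcard : Jst.ncard = k - 3)
    (hX₀st : X₀st ⊆ X) (hX₀stne : X₀st.Nonempty)
    (hHst : N✶.IsHyperplane (Jst ∪ X₀st))
    (hne : Jst ≠ J) :
    (X₁ ∩ X₀st).ncard ≠ X₁.ncard - 1 ∧ (X₂ ∩ X₀st).ncard ≠ X₂.ncard - 1 :=
  stmt_11_general N k hk hE X hXcard hXcc J X₁ X₂ hJ hJcard hX₁₂ hdisj hH₁ hH₂ Jst X₀st hJst
    hJstcard hHst hne
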